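/- For every real z with 0 ≤ z < 1 such that ∑_{n=0}^∞ π_n z^n < ∞, the generating function Π(z) = ∑_{n=0}^∞ π_n z^n satisfies Π(z)·(z − S*(λ−λz)) = π₀·(V*(λ−λz) − 1)·S*(λ−λz)/(1−ν₀). -/

import Mathlib

open MeasureTheory Filter Set Topology Asymptotics
open scoped ENNReal

noncomputable section

/-- Laplace-transform value `F*(λ − λz) = ∫ e^{−(λ−λz)t} dF(t)` (Bochner integral). -/
def qLap (μ : Measure ℝ) (lam z : ℝ) : ℝ := ∫ t, Real.exp (-(lam - lam * z) * t) ∂μ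

/-- Derivative value `F*'(λ − λz) = ∫ λ t e^{−(λ−λz)t} dF(t)`. -/
def qLapD (μ : Measure ℝ) (lam z : ℝ) : ℝ := ∫ t, lam * t * Real.exp (-(lam - lam * z) * t) ∂μ

/-- Laplace-transform value as a lower integral in `ℝ≥0∞` (possibly `+∞`). -/
def qLapE (μ : Measure ℝ) (lam z : ℝ) : ℝ≥0∞ :=
  ∫⁻ t, ENNReal.ofReal (Real.exp (-(lam - lam * z) * t)) ∂μ

/-- `R` is the leftmost (real) singular point of `z ↦ F*(λ − λz)`:
`∫ e^{λ(r−1)t} dF(t)` converges for `1 ≤ r < R` and diverges for `r > R`. -/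
def qAbscissa (μ : Measure ℝ) (lam R : ℝ) : Prop :=
  1 ≤ R ∧ (∀ r : ℝ, 1 ≤ r → r < R → Integrable (fun t => Real.exp (lam * (r - 1) * t)) μ) ∧
    (∀ r : ℝ, R < r → ¬ Integrable (fun t => Real.exp (lam * (r - 1) * t)) μ)

/-- `a_j` (resp. `ν_j`): probability that `j` Poisson(λ) arrivals occur during a
time distributed according to `μ`. -/
def qCoef (μ : Measure ℝ) (lam : ℝ) (j : ℕ) : ℝ :=
  ∫ t, (lam * t) ^ j / (Nat.factorial j : ℝ) * Real.exp (-lam * t) ∂μ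

/-- `b_j = ∑_{i=1}^{j+1} (ν_i / (1 − ν₀)) a_{j+1−i}`. -/
def qBcoef (μS μV : Measure ℝ) (lam : ℝ) (j : ℕ) : ℝ :=
  ∑ i ∈ Finset.Icc 1 (j + 1), qCoef μV lam i / (1 - qCoef μV lam 0) * qCoef μS lam (j + 1 - i)

/-- A positive measurable function is slowly varying at `+∞`. -/
def SlowlyVaryingAtTop (L : ℝ → ℝ) : Prop :=
  Measurable L ∧ (∀ x : ℝ, 0 < x → 0 < L x) ∧
    ∀ t : ℝ, 0 < t → Tendsto (fun x => L (t * x) / L x) atTop (nhds 1)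

/-!
Multiplying the `j`-th invariance equation by `z ^ (j + 1)` and summing over `j`, both
convolutions on the right become Cauchy products of power series. Since
`∑ a_j z^j = S*(λ − λz)` and `∑ ν_j z^j = V*(λ − λz)` (for `|z| ≤ 1`, by dominated convergence
inside the Laplace integral), this gives
`Π(z) z = π₀ (V*(λ − λz) − ν₀) S*(λ − λz) / (1 − ν₀) + (Π(z) − π₀) S*(λ − λz)`,
which rearranges to the claim because `ν₀ < 1`.
-/

lemma ae_nonneg_of_measure_Iio_zero {μ : Measure ℝ} (hμ : μ (Iio 0) = 0) : ∀ᵐ t ∂μ, 0 ≤ t :=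
  ae_iff.2 <| by simp only [not_le]; exact hμ

lemma integrable_exp_mul_of_nonpos {μ : Measure ℝ} [IsFiniteMeasure μ] (hμ : μ (Iio 0) = 0)
    {c : ℝ} (hc : c ≤ 0) : Integrable (fun t => Real.exp (c * t)) μ := by
  refine (integrable_const 1).mono' (by fun_prop) ?_
  filter_upwards [ae_nonneg_of_measure_Iio_zero hμ] with t ht
  rw [Real.norm_of_nonneg (Real.exp_nonneg _), Real.exp_le_one_iff]
  exact mul_nonpos_of_nonpos_of_nonneg hc ht

lemma qCoef_zero_lt_one {μ : Measure ℝ} [IsProbabilityMeasure μ] (hμ : μ (Iio 0) = 0)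
    (hpos : 0 < μ (Ioi 0)) {lam : ℝ} (hlam : 0 < lam) : qCoef μ lam 0 < 1 := by
  have hint := integrable_exp_mul_of_nonpos hμ (neg_nonpos.2 hlam.le)
  have hgap : 1 - qCoef μ lam 0 = ∫ t, (1 - Real.exp (-lam * t)) ∂μ := by
    rw [integral_sub (integrable_const 1) hint]
    simp [qCoef]
  rw [← sub_pos, hgap]
  refine (integral_pos_iff_support_of_nonneg_ae ?_ ((integrable_const 1).sub hint)).2 ?_
  · filter_upwards [ae_nonneg_of_measure_Iio_zero hμ] with t ht
    simpa [Real.exp_le_one_iff] using mul_nonneg hlam.le ht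
  · refine hpos.trans_le (measure_mono fun t (ht : 0 < t) => ?_)
    exact (sub_pos.2 (Real.exp_lt_one_iff.2 (by nlinarith))).ne'

lemma hasSum_poisson_mul_pow (lam t z : ℝ) :
    HasSum (fun j : ℕ => (lam * t) ^ j / (Nat.factorial j : ℝ) * Real.exp (-lam * t) * z ^ j)
      (Real.exp (-(lam - lam * z) * t)) := by
  have h := (NormedSpace.expSeries_div_hasSum_exp (lam * t * z)).mul_right (Real.exp (-lam * t))
  rw [← Real.exp_eq_exp_ℝ] at h
  rw [show -(lam - lam * z) * t = lam * t * z + -lam * t by ring, Real.exp_add]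
  exact h.congr_fun fun j => by ring

lemma hasSum_qCoef_mul_pow {μ : Measure ℝ} [IsFiniteMeasure μ] (hμ : μ (Iio 0) = 0)
    {lam z : ℝ} (hlam : 0 ≤ lam) (hz : |z| ≤ 1) :
    HasSum (fun j => qCoef μ lam j * z ^ j) (qLap μ lam z) := by
  simp only [qCoef, qLap, ← integral_mul_const]
  refine hasSum_integral_of_dominated_convergence
    (fun j t => (lam * t) ^ j / (Nat.factorial j : ℝ) * Real.exp (-lam * t) * |z| ^ j)
    (fun j => by fun_prop) (fun j => ?_) (Eventually.of_forall fun t => ?_) ?_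
    (Eventually.of_forall fun t => hasSum_poisson_mul_pow lam t z)
  · filter_upwards [ae_nonneg_of_measure_Iio_zero hμ] with t ht
    simp [abs_of_nonneg hlam, abs_of_nonneg ht]
  · exact (hasSum_poisson_mul_pow lam t |z|).summable
  · simp only [fun t => (hasSum_poisson_mul_pow lam t |z|).tsum_eq]
    exact integrable_exp_mul_of_nonpos hμ (neg_nonpos.2 (sub_nonneg.2 (mul_le_of_le_one_right hlam hz)))

open Finset in
lemma hasSum_sum_Icc_mul_mul_pow {R : Type*} [NormedCommRing R] [CompleteSpace R]
    {x y : ℕ → R} {z X Y : R} (hx : HasSum (fun n => x n * z ^ n) X)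
    (hy : HasSum (fun n => y n * z ^ n) Y) (hxn : Summable fun n => ‖x n * z ^ n‖)
    (hyn : Summable fun n => ‖y n * z ^ n‖) :
    HasSum (fun j => (∑ k ∈ Icc 1 (j + 1), x k * y (j + 1 - k)) * z ^ (j + 1)) ((X - x 0) * Y) := by
  have hx' : HasSum (fun k => x (k + 1) * z ^ (k + 1)) (X - x 0) := by
    simpa using (hasSum_nat_add_iff' 1).2 hx
  have hprod := hasSum_sum_range_mul_of_summable_norm
    ((summable_nat_add_iff (f := fun n => ‖x n * z ^ n‖) 1).2 hxn) hyn
  rw [hx'.tsum_eq, hy.tsum_eq] at hprod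
  refine hprod.congr_fun fun j => ?_
  rw [← Finset.Ico_add_one_right_eq_Icc, sum_Ico_eq_sum_range, Nat.add_sub_cancel, sum_mul]
  refine sum_congr rfl fun k hk => ?_
  have hkj : k ≤ j := Nat.lt_succ_iff.1 (mem_range.1 hk)
  rw [add_comm 1 k, show j + 1 - (k + 1) = j - k by omega,
    show j + 1 = (k + 1) + (j - k) by omega, pow_add]
  ring

theorem stmt4_general
    (μS μV : Measure ℝ) [IsProbabilityMeasure μS] [IsProbabilityMeasure μV]
    (hSsupp : μS (Set.Iio 0) = 0) (hVsupp : μV (Set.Iio 0) = 0)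
    (lam : ℝ) (hlam : 0 < lam)
    (hVpos : 0 < μV (Set.Ioi 0))
    (π : ℕ → ℝ)
    (hinv : ∀ j : ℕ, π j = π 0 * qBcoef μS μV lam j +
      ∑ k ∈ Finset.Icc 1 (j + 1), π k * qCoef μS lam (j + 1 - k))
    :
    ∀ z : ℝ, 0 ≤ z → z < 1 → Summable (fun n : ℕ => π n * z ^ n) →
      (∑' n : ℕ, π n * z ^ n) * (z - qLap μS lam z) =
        π 0 * (qLap μV lam z - 1) * qLap μS lam z / (1 - qCoef μV lam 0) := by
  intro z hz0 hz1 hsum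
  have hz : |z| ≤ 1 := abs_le.2 ⟨by linarith, hz1.le⟩
  have hS := hasSum_qCoef_mul_pow hSsupp hlam.le hz
  have hV : HasSum (fun n => qCoef μV lam n / (1 - qCoef μV lam 0) * z ^ n)
      (qLap μV lam z / (1 - qCoef μV lam 0)) :=
    ((hasSum_qCoef_mul_pow hVsupp hlam.le hz).div_const _).congr_fun fun n => div_mul_eq_mul_div ..
  have hν₀ : 1 - qCoef μV lam 0 ≠ 0 := (sub_pos.2 (qCoef_zero_lt_one hVsupp hVpos hlam)).ne'
  have hbusy := hasSum_sum_Icc_mul_mul_pow hsum.hasSum hS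
    (summable_norm_iff.2 hsum) (summable_norm_iff.2 hS.summable)
  have hidle := hasSum_sum_Icc_mul_mul_pow hV hS
    (summable_norm_iff.2 hV.summable) (summable_norm_iff.2 hS.summable)
  have hshift : HasSum (fun j => π j * z ^ (j + 1)) ((∑' n, π n * z ^ n) * z) :=
    (hsum.hasSum.mul_right z).congr_fun fun j => by ring
  have key := hshift.unique (((hidle.mul_left (π 0)).add hbusy).congr_fun fun j => by
    rw [hinv j, qBcoef]; ring)
  field_simp at key ⊢
  linear_combination key

theorem stmt4
    (μS μV : Measure ℝ) [IsProbabilityMeasure μS] [IsProbabilityMeasure μV]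
    (hSsupp : μS (Set.Iio 0) = 0) (hVsupp : μV (Set.Iio 0) = 0)
    (lam : ℝ) (hlam : 0 < lam)
    (hSint : Integrable (fun t => t) μS) (hVint : Integrable (fun t => t) μV)
    (ES EV : ℝ) (hES : ES = ∫ t, t ∂μS) (hEV : EV = ∫ t, t ∂μV)
    (hESpos : 0 < ES) (hEVpos : 0 < EV) (hVpos : 0 < μV (Set.Ioi 0))
    (ρ : ℝ) (hρdef : ρ = lam * ES)
    (π : ℕ → ℝ) (hπnn : ∀ n, 0 ≤ π n) (hπne : π ≠ 0)
    (hinv : ∀ j : ℕ, π j = π 0 * qBcoef μS μV lam j +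
      ∑ k ∈ Finset.Icc 1 (j + 1), π k * qCoef μS lam (j + 1 - k))
    :
    ∀ z : ℝ, 0 ≤ z → z < 1 → Summable (fun n : ℕ => π n * z ^ n) →
      (∑' n : ℕ, π n * z ^ n) * (z - qLap μS lam z) =
        π 0 * (qLap μV lam z - 1) * qLap μS lam z / (1 - qCoef μV lam 0) :=
  stmt4_general μS μV hSsupp hVsupp lam hlam hVpos π hinv
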